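/- Let C₁ > 0 and let (z_n)_{n≥1} be a sequence of real numbers satisfying |z_n − π(n − 1/4)| ≤ C₁/n for all n ≥ 1. Then there exist constants c > 0 and C > 0 (depending only on C₁) such that for every ℓ ∈ ℝ and every axis-parallel square Q ⊂ ℝ² of side length R₁ ≥ 3, the number of pairs (n₁, n₂) of positive integers with (n₁, n₂) ∈ Q and |z_{n₁}² + z_{n₂}² − ℓ| < 1 is at most C · exp(c · log R₁ / log log R₁). -/

import Mathlib

open Real

/-!
Since `z_n² = π² (n - 1/4)² + O(1)`, the condition `|z_{n₁}² + z_{n₂}² - ℓ| < 1` confines the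
integer `m = (4n₁ - 1)² + (4n₂ - 1)²` to an interval of bounded length, so it suffices to bound,
for each `m`, the lattice points on the circle `x² + y² = m` inside a box of side `s = 4R₁`.
If `m ≤ s⁷` there are at most `r₂(m) ≤ d(m)²` of them (a primitive representation `m = A² + B²`
yields the square root `A/B` of `-1` modulo `m`, and there are at most `d(m)` such roots), and
`d(m) ≤ exp(O(log s / log log s))`. If `m > s⁷`, Jarník's argument applies: three lattice points
on the circle span a triangle whose doubled area is a nonzero integer, so by `abc = 4rΔ` the
product of its squared sides, at most `(2s²)³`, is at least `4m`; hence there are at most two.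
-/

theorem IsLocalRing.card_sq_eq_le_two {R : Type*} [CommRing R] [IsLocalRing R]
    (h2 : IsUnit (2 : R)) {u : R} (hu : IsUnit u) : Nat.card {x : R // x ^ 2 = u} ≤ 2 := by
  change {x : R | x ^ 2 = u}.ncard ≤ 2
  rcases Set.eq_empty_or_nonempty {x : R | x ^ 2 = u} with h | ⟨x₀, hx₀ : x₀ ^ 2 = u⟩
  · simp [h]
  have hsub : {x : R | x ^ 2 = u} ⊆ {x₀, -x₀} := by
    intro y (hy : y ^ 2 = u)
    have hy_unit : IsUnit y := isUnit_of_mul_isUnit_left (y := y) (by rwa [← sq, hy])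
    have hprod : (y - x₀) * (y + x₀) = 0 := by linear_combination hy - hx₀
    have hsum : IsUnit ((y - x₀) + (y + x₀)) := by
      rw [show (y - x₀) + (y + x₀) = 2 * y by ring]; exact h2.mul hy_unit
    rcases isUnit_or_isUnit_of_isUnit_add hsum with h | h
    · exact Or.inr (eq_neg_of_add_eq_zero_left (h.mul_right_eq_zero.mp hprod))
    · exact Or.inl (sub_eq_zero.mp (h.mul_left_eq_zero.mp hprod))
  calc {x : R | x ^ 2 = u}.ncard ≤ ({x₀, -x₀} : Set R).ncard := Set.ncard_le_ncard hsub
    _ ≤ ({-x₀} : Set R).ncard + 1 := Set.ncard_insert_le _ _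
    _ = 2 := by rw [Set.ncard_singleton]

theorem ZMod.card_sq_eq_neg_one_mul {m n : ℕ} (h : m.Coprime n) :
    Nat.card {x : ZMod (m * n) // x ^ 2 = -1} =
      Nat.card {x : ZMod m // x ^ 2 = -1} * Nat.card {x : ZMod n // x ^ 2 = -1} := by
  let e := (ZMod.chineseRemainder h).toEquiv
  have he : ∀ x, x ^ 2 = -1 ↔ (e x).1 ^ 2 = -1 ∧ (e x).2 ^ 2 = -1 := fun x => by
    rw [← e.injective.eq_iff]
    simp [e, Prod.ext_iff]
  rw [← Nat.card_prod, Nat.card_congr ((e.subtypeEquiv he).trans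
    (Equiv.subtypeProdEquivProd (p := fun a : ZMod m => a ^ 2 = -1)
      (q := fun b : ZMod n => b ^ 2 = -1)))]

theorem ZMod.sq_ne_neg_one_of_four_dvd {n : ℕ} (hn : 4 ∣ n) (x : ZMod n) : x ^ 2 ≠ -1 := by
  intro hx
  have h4 : ∀ y : ZMod 4, y ^ 2 ≠ -1 := by decide
  exact h4 (ZMod.castHom hn (ZMod 4) x) (by rw [← map_pow, hx, map_neg, map_one])

theorem ZMod.isLocalRing_prime_pow {p d : ℕ} (hp : p.Prime) (hd : 0 < d) :
    IsLocalRing (ZMod (p ^ d)) := by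
  have : Fact (1 < p ^ d) := ⟨Nat.one_lt_pow hd.ne' hp.one_lt⟩
  have key : ∀ a : ZMod (p ^ d), a ∈ nonunits _ ↔ p ∣ a.val := fun a => by
    rw [mem_nonunits_iff, ← ZMod.natCast_zmod_val a, ZMod.isUnit_natCast_iff_not_dvd_pow hp hd,
      not_not, ZMod.val_natCast_of_lt (ZMod.val_lt a)]
  refine IsLocalRing.of_nonunits_add fun a b ha hb => ?_
  rw [key] at ha hb
  rw [key, ZMod.val_add]
  exact (Nat.dvd_mod_iff (dvd_pow_self p hd.ne')).mpr (dvd_add ha hb)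

theorem ZMod.card_sq_eq_neg_one_prime_pow_le_two {p d : ℕ} (hp : p.Prime) (hd : 0 < d) :
    Nat.card {x : ZMod (p ^ d) // x ^ 2 = -1} ≤ 2 := by
  have : NeZero (p ^ d) := ⟨pow_ne_zero d hp.ne_zero⟩
  rcases hp.eq_two_or_odd' with rfl | hodd
  · rcases Nat.lt_or_ge d 2 with hd2 | hd2
    · obtain rfl : d = 1 := by omega
      exact (Finite.card_subtype_le _).trans_eq (by simp)
    · have : IsEmpty {x : ZMod (2 ^ d) // x ^ 2 = -1} :=
        ⟨fun x => ZMod.sq_ne_neg_one_of_four_dvd (pow_dvd_pow 2 hd2) x.1 x.2⟩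
      simp
  · have := ZMod.isLocalRing_prime_pow hp hd
    refine IsLocalRing.card_sq_eq_le_two ?_ isUnit_one.neg
    rw [← Nat.cast_ofNat, ZMod.isUnit_natCast_iff_not_dvd_pow hp hd]
    intro h
    obtain rfl := (Nat.prime_dvd_prime_iff_eq hp Nat.prime_two).mp h
    exact absurd hodd (by decide)

theorem ZMod.card_sq_eq_neg_one_le_card_divisors {n : ℕ} (hn : n ≠ 0) :
    Nat.card {x : ZMod n // x ^ 2 = -1} ≤ n.divisors.card := by
  induction n using Nat.recOnPosPrimePosCoprime with
  | prime_pow p d hp hd =>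
    rw [Nat.divisors_prime_pow hp, Finset.card_map, Finset.card_range]
    exact (ZMod.card_sq_eq_neg_one_prime_pow_le_two hp hd).trans (by omega)
  | zero => exact absurd rfl hn
  | one => exact (Finite.card_subtype_le _).trans_eq (by simp)
  | coprime a b ha hb hab iha ihb =>
    rw [ZMod.card_sq_eq_neg_one_mul hab, Nat.Coprime.card_divisors_mul hab]
    exact Nat.mul_le_mul (iha (by omega)) (ihb (by omega))

def sumTwoSquaresReps (m : ℕ) : Finset (ℕ × ℕ) :=
  (Finset.Icc 1 m ×ˢ Finset.Icc 1 m).filter fun q => q.1 ^ 2 + q.2 ^ 2 = m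

theorem mem_sumTwoSquaresReps {m : ℕ} {q : ℕ × ℕ} :
    q ∈ sumTwoSquaresReps m ↔ 0 < q.1 ∧ 0 < q.2 ∧ q.1 ^ 2 + q.2 ^ 2 = m := by
  simp only [sumTwoSquaresReps, Finset.mem_filter, Finset.mem_product, Finset.mem_Icc]
  constructor
  · rintro ⟨⟨⟨h1, -⟩, h2, -⟩, h⟩
    exact ⟨h1, h2, h⟩
  · rintro ⟨h1, h2, h⟩
    have := Nat.le_self_pow two_ne_zero q.1
    have := Nat.le_self_pow two_ne_zero q.2
    exact ⟨⟨⟨h1, by omega⟩, h2, by omega⟩, h⟩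

theorem eq_of_sq_add_sq_eq_of_mul_modEq {m A B A' B' : ℕ} (hA : 0 < A) (hA' : 0 < A')
    (hAB : A.Coprime B) (hAB' : A'.Coprime B')
    (h : A ^ 2 + B ^ 2 = m) (h' : A' ^ 2 + B' ^ 2 = m) (hmod : A * B' ≡ A' * B [MOD m]) :
    A = A' ∧ B = B' := by
  have hdvd : (m : ℤ) ∣ A' * B - A * B' := by exact_mod_cast (Nat.modEq_iff_dvd.mp hmod)
  -- Brahmagupta–Fibonacci: the cross term is too small to be a nonzero multiple of `m`.
  have hid : ((A' * B - A * B' : ℤ)) ^ 2 + (A * A' + B * B' : ℤ) ^ 2 = (m : ℤ) ^ 2 := by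
    have hm : (m : ℤ) = A ^ 2 + B ^ 2 := by rw [← h]; push_cast; rfl
    have hm' : (m : ℤ) = A' ^ 2 + B' ^ 2 := by rw [← h']; push_cast; rfl
    linear_combination (-(m : ℤ)) * hm' - ((A' : ℤ) ^ 2 + B' ^ 2) * hm
  have hpos : (0 : ℤ) < A * A' + B * B' := by positivity
  have hcross : (A' * B : ℤ) - A * B' = 0 :=
    Int.eq_zero_of_abs_lt_dvd hdvd (abs_lt_of_sq_lt_sq (by nlinarith) (by positivity))
  have hmul : A * B' = A' * B := by zify; linarith [hcross]
  have hAA' : A = A' := Nat.dvd_antisymm (hAB.dvd_of_dvd_mul_right ⟨B', hmul.symm⟩)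
    (hAB'.dvd_of_dvd_mul_right ⟨B, hmul⟩)
  subst hAA'
  exact ⟨rfl, Nat.eq_of_mul_eq_mul_left hA hmul.symm⟩

theorem card_coprime_sumTwoSquaresReps_le_card_sq_eq_neg_one (m : ℕ) :
    ((sumTwoSquaresReps m).filter fun q => q.1.Coprime q.2).card ≤
      Nat.card {x : ZMod m // x ^ 2 = -1} := by
  rcases eq_or_ne m 0 with rfl | hm
  · simp [sumTwoSquaresReps]
  have : NeZero m := ⟨hm⟩
  have hunit : ∀ q ∈ (sumTwoSquaresReps m).filter fun q => q.1.Coprime q.2,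
      IsUnit (q.2 : ZMod m) := by
    intro q hq
    obtain ⟨⟨-, -, hsum⟩, hcop⟩ :=
      Finset.mem_filter.mp hq |>.imp_left mem_sumTwoSquaresReps.mp
    rw [ZMod.isUnit_iff_coprime, ← hsum, sq q.2, Nat.coprime_add_mul_left_right]
    exact (hcop.pow_left 2).symm
  rw [← Set.ncard_coe_finset]
  refine Set.ncard_le_ncard_of_injOn (fun q => (q.1 : ZMod m) * (q.2 : ZMod m)⁻¹) ?_ ?_
    (Set.toFinite _)
  · intro q hq
    obtain ⟨⟨-, -, hsum⟩, -⟩ :=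
      Finset.mem_filter.mp hq |>.imp_left mem_sumTwoSquaresReps.mp
    have hzero : (q.1 : ZMod m) ^ 2 + (q.2 : ZMod m) ^ 2 = 0 := by
      rw [← ZMod.natCast_self m, ← hsum]; push_cast; rfl
    show ((q.1 : ZMod m) * (q.2 : ZMod m)⁻¹) ^ 2 = -1
    have hinv := ZMod.mul_inv_of_unit _ (hunit q hq)
    linear_combination
      ((q.2 : ZMod m)⁻¹) ^ 2 * hzero - ((q.2 : ZMod m) * (q.2 : ZMod m)⁻¹ + 1) * hinv
  · intro q hq q' hq' heq
    have hinv := ZMod.mul_inv_of_unit _ (hunit q hq)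
    have hinv' := ZMod.mul_inv_of_unit _ (hunit q' hq')
    have hmod : q.1 * q'.2 ≡ q'.1 * q.2 [MOD m] := by
      rw [← ZMod.natCast_eq_natCast_iff]
      push_cast
      linear_combination (q.2 * q'.2 : ZMod m) * heq - q.1 * q'.2 * hinv + q'.1 * q.2 * hinv'
    obtain ⟨⟨h1, -, hsum⟩, hcop⟩ :=
      Finset.mem_filter.mp hq |>.imp_left mem_sumTwoSquaresReps.mp
    obtain ⟨⟨h1', -, hsum'⟩, hcop'⟩ :=
      Finset.mem_filter.mp hq' |>.imp_left mem_sumTwoSquaresReps.mp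
    obtain ⟨e1, e2⟩ := eq_of_sq_add_sq_eq_of_mul_modEq h1 h1' hcop hcop' hsum hsum' hmod
    exact Prod.ext e1 e2

theorem card_coprime_sumTwoSquaresReps_le_card_divisors (m : ℕ) :
    ((sumTwoSquaresReps m).filter fun q => q.1.Coprime q.2).card ≤ m.divisors.card := by
  rcases eq_or_ne m 0 with rfl | hm
  · simp [sumTwoSquaresReps]
  exact (card_coprime_sumTwoSquaresReps_le_card_sq_eq_neg_one m).trans
    (ZMod.card_sq_eq_neg_one_le_card_divisors hm)

theorem card_sumTwoSquaresReps_gcd_eq_le (m g : ℕ) :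
    ((sumTwoSquaresReps m).filter fun q => Nat.gcd q.1 q.2 = g).card ≤
      ((sumTwoSquaresReps (m / g ^ 2)).filter fun q => q.1.Coprime q.2).card := by
  refine Finset.card_le_card_of_injOn (fun q => (q.1 / g, q.2 / g)) ?_ ?_
  · rintro ⟨A, B⟩ hq
    obtain ⟨⟨hA, hB, hsum⟩, hgAB⟩ :
        (0 < A ∧ 0 < B ∧ A ^ 2 + B ^ 2 = m) ∧ Nat.gcd A B = g :=
      Finset.mem_filter.mp hq |>.imp_left mem_sumTwoSquaresReps.mp
    have hg : 0 < g := hgAB ▸ Nat.gcd_pos_of_pos_left B hA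
    obtain ⟨a, rfl⟩ : g ∣ A := hgAB ▸ Nat.gcd_dvd_left A B
    obtain ⟨b, rfl⟩ : g ∣ B := hgAB ▸ Nat.gcd_dvd_right _ B
    have hcop := Nat.coprime_div_gcd_div_gcd (hgAB ▸ hg)
    rw [hgAB, Nat.mul_div_cancel_left _ hg, Nat.mul_div_cancel_left _ hg] at hcop
    have hm : m / g ^ 2 = a ^ 2 + b ^ 2 := by
      rw [← hsum, show (g * a) ^ 2 + (g * b) ^ 2 = g ^ 2 * (a ^ 2 + b ^ 2) by ring,
        Nat.mul_div_cancel_left _ (pow_pos hg 2)]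
    simp only [Finset.coe_filter, Nat.mul_div_cancel_left _ hg]
    exact ⟨mem_sumTwoSquaresReps.mpr ⟨Nat.pos_of_mul_pos_left hA,
      Nat.pos_of_mul_pos_left hB, hm.symm⟩, hcop⟩
  · rintro ⟨A, B⟩ hq ⟨A', B'⟩ hq' heq
    obtain ⟨-, hg⟩ := Finset.mem_filter.mp hq
    obtain ⟨-, hg'⟩ := Finset.mem_filter.mp hq'
    obtain ⟨e1, e2⟩ := Prod.ext_iff.mp heq
    simp only at e1 e2 hg hg'
    have cancel : ∀ {x y : ℕ}, g ∣ x → g ∣ y → x / g = y / g → x = y := fun hx hy h => by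
      rw [← Nat.mul_div_cancel' hx, ← Nat.mul_div_cancel' hy, h]
    exact Prod.ext (cancel (hg ▸ Nat.gcd_dvd_left A B) (hg' ▸ Nat.gcd_dvd_left A' B') e1)
      (cancel (hg ▸ Nat.gcd_dvd_right A B) (hg' ▸ Nat.gcd_dvd_right A' B') e2)

theorem card_sumTwoSquaresReps_le (m : ℕ) :
    (sumTwoSquaresReps m).card ≤ m.divisors.card ^ 2 := by
  set t := m.divisors.filter fun g => g ^ 2 ∣ m
  have hmaps : ∀ q ∈ sumTwoSquaresReps m, Nat.gcd q.1 q.2 ∈ t := by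
    intro q hq
    obtain ⟨h1, -, hsum⟩ := mem_sumTwoSquaresReps.mp hq
    have hsq : Nat.gcd q.1 q.2 ^ 2 ∣ m := hsum ▸ dvd_add
      (pow_dvd_pow_of_dvd (Nat.gcd_dvd_left _ _) 2)
      (pow_dvd_pow_of_dvd (Nat.gcd_dvd_right _ _) 2)
    have hm : m ≠ 0 := by rw [← hsum]; positivity
    exact Finset.mem_filter.mpr
      ⟨Nat.mem_divisors.mpr ⟨(dvd_pow_self _ two_ne_zero).trans hsq, hm⟩, hsq⟩
  have hfiber : ∀ g ∈ t,
      ((sumTwoSquaresReps m).filter fun q => Nat.gcd q.1 q.2 = g).card ≤ m.divisors.card := by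
    intro g hg
    obtain ⟨hgm, hsq⟩ := Finset.mem_filter.mp hg
    calc _ ≤ _ := card_sumTwoSquaresReps_gcd_eq_le m g
      _ ≤ (m / g ^ 2).divisors.card := card_coprime_sumTwoSquaresReps_le_card_divisors _
      _ ≤ m.divisors.card := Finset.card_le_card
        (Nat.divisors_subset_of_dvd (Nat.mem_divisors.mp hgm).2 (Nat.div_dvd_of_dvd hsq))
  calc (sumTwoSquaresReps m).card
      = ∑ g ∈ t, ((sumTwoSquaresReps m).filter fun q => Nat.gcd q.1 q.2 = g).card :=
        Finset.card_eq_sum_card_fiberwise hmaps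
    _ ≤ t.card * m.divisors.card := Finset.sum_le_card_nsmul _ _ _ hfiber
    _ ≤ m.divisors.card ^ 2 := by
        rw [sq]; exact Nat.mul_le_mul_right _ (Finset.card_filter_le _ _)

theorem pow_le_exp_mul_log {b K : ℝ} {k : ℕ} (hb : 1 ≤ b) (hk : (k : ℝ) ≤ K) :
    b ^ k ≤ exp (K * log b) := by
  rw [← rpow_natCast, rpow_def_of_pos (by linarith), mul_comm]
  exact exp_le_exp.mpr (mul_le_mul_of_nonneg_right hk (log_nonneg hb))

theorem sqrt_mul_log_two_mul_mul_log_le {L : ℝ} (hL : 2 ≤ L) :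
    √L * log (2 * L) * log L ≤ 20 * L := by
  set Q := √(√L)
  have hQ4 : Q ^ 4 = L := by
    rw [show Q ^ 4 = (Q ^ 2) ^ 2 by ring, sq_sqrt (sqrt_nonneg L), sq_sqrt (by linarith)]
  have hQ : 1 ≤ Q := by rw [one_le_sqrt, one_le_sqrt]; linarith
  have hlogL : log L ≤ 4 * Q := by
    have := log_le_sub_one_of_pos (by linarith : 0 < Q)
    rw [← hQ4, log_pow]; push_cast; linarith
  have hlog2L : log (2 * L) ≤ 5 * Q := by
    rw [log_mul two_ne_zero (by linarith)]
    linarith [log_two_lt_d9]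
  have hsqrt : √L = Q ^ 2 := (sq_sqrt (sqrt_nonneg L)).symm
  calc √L * log (2 * L) * log L ≤ Q ^ 2 * (5 * Q) * (4 * Q) := by
        rw [hsqrt]
        gcongr
        exact log_nonneg (by linarith)
    _ = 20 * L := by rw [← hQ4]; ring

theorem factorization_add_one_le_two_mul_log {n p : ℕ} {x : ℝ} (hx : 16 ≤ x)
    (hn : (n : ℝ) ≤ x) (hp : p ∈ n.primeFactors) : (n.factorization p + 1 : ℝ) ≤ 2 * log x := by
  have h2n : 2 ^ n.factorization p ≤ n :=
    (Nat.pow_le_pow_left (Nat.prime_of_mem_primeFactors hp).two_le _).trans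
      (Nat.ordProj_le p ((Nat.mem_primeFactors.mp hp).2.2))
  have hlog : n.factorization p * log 2 ≤ log x := by
    rw [← log_pow]
    exact log_le_log (by positivity) ((by exact_mod_cast h2n : (2 : ℝ) ^ _ ≤ n).trans hn)
  have hx4 : 4 * log 2 ≤ log x := by
    rw [← log_rpow two_pos]; exact log_le_log (by positivity) (by norm_num; linarith)
  have hlog2 : 0 ≤ 2 * log 2 - 1 := by linarith [log_two_gt_d9]
  nlinarith [log_two_gt_d9, mul_nonneg (sub_nonneg.mpr hx4) hlog2]

theorem sum_factorization_mul_log_le {n : ℕ} {t : ℝ} (ht : 1 < t) :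
    (∑ p ∈ n.primeFactors with t < ((p : ℕ) : ℝ), (n.factorization p : ℝ)) * log t ≤ log n := by
  rw [log_nat_eq_sum_factorization, Finsupp.sum, Nat.support_factorization, Finset.sum_mul]
  refine (Finset.sum_le_sum fun p hp => ?_).trans
    (Finset.sum_le_sum_of_subset_of_nonneg (Finset.filter_subset _ _) fun p _ _ => ?_)
  · exact mul_le_mul_of_nonneg_left (log_le_log (by linarith) (Finset.mem_filter.mp hp).2.le)
      (by positivity)
  · exact mul_nonneg (by positivity) (log_natCast_nonneg p)

theorem card_divisors_le_exp {n : ℕ} {x : ℝ} (hx : 16 ≤ x) (hn : (n : ℝ) ≤ x) :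
    (n.divisors.card : ℝ) ≤ exp (100 * log x / log (log x)) := by
  rcases eq_or_ne n 0 with rfl | hn0
  · simpa using (exp_pos _).le
  -- Primes below `√(log x)` are few and have exponents `O(log x)`; the primes above it have
  -- total exponent `O(log x / log log x)`.
  set L := log x
  have hL : 2 ≤ L := by
    rw [le_log_iff_exp_le (by linarith)]
    nlinarith [exp_one_lt_d9, exp_pos 1, (by rw [← exp_add]; norm_num : exp 2 = exp 1 * exp 1)]
  have hlogL : 0 < log L := log_pos (by linarith)
  set t := √L
  have ht : 1 < t := by rw [lt_sqrt zero_le_one]; linarith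
  let e p := (n.factorization p : ℝ)
  let small := n.primeFactors.filter fun p : ℕ => (p : ℝ) ≤ t
  let large := n.primeFactors.filter fun p : ℕ => ¬ (p : ℝ) ≤ t
  have hsmall : ∏ p ∈ small, (e p + 1) ≤ exp (t * log (2 * L)) := by
    have hcard : (small.card : ℝ) ≤ t := by
      refine le_trans ?_ (Nat.floor_le (sqrt_nonneg L))
      have hsub : small ⊆ Finset.Icc 1 ⌊t⌋₊ := fun p hp => by
        obtain ⟨hp, hpt⟩ := Finset.mem_filter.mp hp
        exact Finset.mem_Icc.mpr
          ⟨(Nat.prime_of_mem_primeFactors hp).one_le, Nat.le_floor hpt⟩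
      exact_mod_cast (Finset.card_le_card hsub).trans_eq (by simp)
    calc ∏ p ∈ small, (e p + 1) ≤ ∏ p ∈ small, 2 * L :=
          Finset.prod_le_prod (fun _ _ => by positivity) fun p hp =>
            factorization_add_one_le_two_mul_log hx hn (Finset.mem_filter.mp hp).1
      _ = (2 * L) ^ small.card := Finset.prod_const _
      _ ≤ exp (t * log (2 * L)) := pow_le_exp_mul_log (by linarith) hcard
  have hlarge : ∏ p ∈ large, (e p + 1) ≤ exp (2 * L / log L * log 2) := by
    have hsum : ((∑ p ∈ large, n.factorization p : ℕ) : ℝ) ≤ 2 * L / log L := by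
      have hlog := sum_factorization_mul_log_le (n := n) ht
      simp only [← not_le] at hlog
      rw [show log t = log L / 2 from log_sqrt (by linarith)] at hlog
      have hn : log n ≤ L := log_le_log (by positivity) hn
      rw [le_div_iff₀ hlogL]
      push_cast
      linarith
    calc ∏ p ∈ large, (e p + 1) ≤ ∏ p ∈ large, (2 : ℝ) ^ n.factorization p :=
          Finset.prod_le_prod (fun _ _ => by positivity) fun p _ => by
            show (n.factorization p : ℝ) + 1 ≤ 2 ^ n.factorization p
            exact_mod_cast Nat.lt_two_pow_self (n := n.factorization p)
      _ = 2 ^ ∑ p ∈ large, n.factorization p := Finset.prod_pow_eq_pow_sum _ _ _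
      _ ≤ exp (2 * L / log L * log 2) := pow_le_exp_mul_log one_le_two hsum
  calc (n.divisors.card : ℝ) = ∏ p ∈ n.primeFactors, (e p + 1) := by
        rw [Nat.card_divisors hn0]; push_cast; rfl
    _ = (∏ p ∈ small, (e p + 1)) * ∏ p ∈ large, (e p + 1) :=
        (Finset.prod_filter_mul_prod_filter_not _ _ _).symm
    _ ≤ exp (t * log (2 * L)) * exp (2 * L / log L * log 2) := by gcongr
    _ ≤ exp (100 * L / log L) := by
        rw [← exp_add, exp_le_exp, ← sub_nonneg]
        have h1 : t * log (2 * L) ≤ 20 * (L / log L) := by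
          rw [← mul_div_assoc, le_div_iff₀ hlogL]; exact sqrt_mul_log_two_mul_mul_log_le hL
        have h2 : 2 * L / log L * log 2 ≤ 2 * (L / log L) := by
          rw [mul_div_assoc]
          exact mul_le_of_le_one_right (by positivity) (by linarith [log_two_lt_d9])
        have : 0 ≤ L / log L := by positivity
        rw [mul_div_assoc]
        linarith

theorem prod_sq_sides_eq_four_mul_sq_cross {R : Type*} [CommRing R] {m x₁ y₁ x₂ y₂ x₃ y₃ : R}
    (h₁ : x₁ ^ 2 + y₁ ^ 2 = m) (h₂ : x₂ ^ 2 + y₂ ^ 2 = m) (h₃ : x₃ ^ 2 + y₃ ^ 2 = m) :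
    ((x₁ - x₂) ^ 2 + (y₁ - y₂) ^ 2) * ((x₂ - x₃) ^ 2 + (y₂ - y₃) ^ 2) *
        ((x₃ - x₁) ^ 2 + (y₃ - y₁) ^ 2) =
      4 * m * ((x₂ - x₁) * (y₃ - y₁) - (y₂ - y₁) * (x₃ - x₁)) ^ 2 := by
  -- With `u = P₂ - P₁`, `v = P₃ - P₁` and `w = 2 P₁`, one has
  -- `(u × v)² |w|² = (w·u)² |v|² - 2 (w·u)(w·v)(u·v) + (w·v)² |u|²`, while the circle
  -- equations say `w·u = -|u|²` and `w·v = -|v|²`.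
  set u₁ := x₂ - x₁; set u₂ := y₂ - y₁; set v₁ := x₃ - x₁; set v₂ := y₃ - y₁
  have hu : 2 * x₁ * u₁ + 2 * y₁ * u₂ + (u₁ ^ 2 + u₂ ^ 2) = 0 := by linear_combination h₂ - h₁
  have hv : 2 * x₁ * v₁ + 2 * y₁ * v₂ + (v₁ ^ 2 + v₂ ^ 2) = 0 := by linear_combination h₃ - h₁
  linear_combination
    (-(2 * x₁ * u₁ + 2 * y₁ * u₂ - (u₁ ^ 2 + u₂ ^ 2)) * (v₁ ^ 2 + v₂ ^ 2)
      + 2 * (u₁ * v₁ + u₂ * v₂) * (2 * x₁ * v₁ + 2 * y₁ * v₂)) * hu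
    + (-2 * (u₁ * v₁ + u₂ * v₂) * (u₁ ^ 2 + u₂ ^ 2)
      - (2 * x₁ * v₁ + 2 * y₁ * v₂ - (v₁ ^ 2 + v₂ ^ 2)) * (u₁ ^ 2 + u₂ ^ 2)) * hv
    + 4 * (u₁ * v₂ - u₂ * v₁) ^ 2 * h₁

theorem four_mul_le_prod_sq_sides {m x₁ y₁ x₂ y₂ x₃ y₃ : ℤ} (h₁ : x₁ ^ 2 + y₁ ^ 2 = m)
    (h₂ : x₂ ^ 2 + y₂ ^ 2 = m) (h₃ : x₃ ^ 2 + y₃ ^ 2 = m) (h₁₂ : (x₁, y₁) ≠ (x₂, y₂))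
    (h₂₃ : (x₂, y₂) ≠ (x₃, y₃)) (h₃₁ : (x₃, y₃) ≠ (x₁, y₁)) :
    4 * m ≤ ((x₁ - x₂) ^ 2 + (y₁ - y₂) ^ 2) * ((x₂ - x₃) ^ 2 + (y₂ - y₃) ^ 2) *
      ((x₃ - x₁) ^ 2 + (y₃ - y₁) ^ 2) := by
  have hside : ∀ {a b c d : ℤ}, (a, b) ≠ (c, d) → (a - c) ^ 2 + (b - d) ^ 2 ≠ 0 :=
    fun hne h => by
    rw [add_eq_zero_iff_of_nonneg (sq_nonneg _) (sq_nonneg _), sq_eq_zero_iff, sq_eq_zero_iff,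
      sub_eq_zero, sub_eq_zero] at h
    exact hne (Prod.ext h.1 h.2)
  have hprod := mul_ne_zero (mul_ne_zero (hside h₁₂) (hside h₂₃)) (hside h₃₁)
  rw [prod_sq_sides_eq_four_mul_sq_cross h₁ h₂ h₃] at hprod ⊢
  have hm : 0 ≤ m := h₁ ▸ by positivity
  have hcross : 0 < ((x₂ - x₁) * (y₃ - y₁) - (y₂ - y₁) * (x₃ - x₁)) ^ 2 :=
    lt_of_le_of_ne (sq_nonneg _) fun h => hprod (by rw [← h, mul_zero])
  nlinarith

theorem one_lt_log_of_three_le {x : ℝ} (hx : 3 ≤ x) : 1 < log x := by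
  rw [lt_log_iff_exp_lt (by linarith)]; linarith [exp_one_lt_d9]

theorem log_div_log_log_le_of_le_pow {R y : ℝ} {k : ℕ} (hR : 3 ≤ R) (hy : R ≤ y)
    (hyk : y ≤ R ^ k) : log y / log (log y) ≤ k * log R / log (log R) := by
  have hlogR := one_lt_log_of_three_le hR
  have hlog : log R ≤ log y := log_le_log (by linarith) hy
  refine div_le_div₀ (by positivity) ?_ (log_pos hlogR) (log_le_log (by linarith) hlog)
  rw [← log_pow]
  exact log_le_log (by linarith) hyk

theorem card_le_of_subset_sumTwoSquaresReps {T : Finset (ℕ × ℕ)} {m : ℕ} {s : ℝ} (hs : 3 ≤ s)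
    (hT : T ⊆ sumTwoSquaresReps m)
    (hbox : ∀ p ∈ T, ∀ q ∈ T, |(p.1 : ℝ) - q.1| ≤ s ∧ |(p.2 : ℝ) - q.2| ≤ s) :
    (T.card : ℝ) ≤ 2 + exp (1400 * log s / log (log s)) := by
  -- Beyond `s ^ 7`, Jarník's inequality `4 m ≤ (2 s²)³` for three points of `T` cannot hold.
  rcases le_or_gt (m : ℝ) (s ^ 7) with hm | hm
  · have hcard : (T.card : ℝ) ≤ (m.divisors.card : ℝ) ^ 2 := by
      exact_mod_cast (Finset.card_le_card hT).trans (card_sumTwoSquaresReps_le m)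
    have hdiv := card_divisors_le_exp (by nlinarith [pow_le_pow_left₀ (by norm_num) hs 7]) hm
    have hratio := log_div_log_log_le_of_le_pow (k := 7) hs
      (le_self_pow₀ (by linarith) (by norm_num)) le_rfl
    calc (T.card : ℝ) ≤ exp (100 * log (s ^ 7) / log (log (s ^ 7))) ^ 2 :=
          hcard.trans (pow_le_pow_left₀ (by positivity) hdiv 2)
      _ = exp (200 * (log (s ^ 7) / log (log (s ^ 7)))) := by rw [← exp_nat_mul]; ring_nf
      _ ≤ exp (1400 * log s / log (log s)) := by
          rw [exp_le_exp, show (1400 : ℝ) * log s / log (log s) = 200 * (7 * log s / log (log s))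
            by ring]
          push_cast at hratio
          linarith
      _ ≤ 2 + exp (1400 * log s / log (log s)) := le_add_of_nonneg_left zero_le_two
  · suffices hle : T.card ≤ 2 by
      have : (T.card : ℝ) ≤ 2 := by exact_mod_cast hle
      linarith [exp_pos (1400 * log s / log (log s))]
    by_contra! h
    obtain ⟨p, hp, q, hq, r, hr, hpq, hpr, hqr⟩ := Finset.two_lt_card.mp h
    have hne : ∀ {p q : ℕ × ℕ}, p ≠ q → ((p.1 : ℤ), (p.2 : ℤ)) ≠ ((q.1 : ℤ), (q.2 : ℤ)) :=
      fun h => by simpa [Prod.ext_iff] using h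
    have hcirc : ∀ p ∈ T, (p.1 : ℤ) ^ 2 + (p.2 : ℤ) ^ 2 = m := fun p hp => by
      exact_mod_cast (mem_sumTwoSquaresReps.mp (hT hp)).2.2
    have hside :
        ∀ p ∈ T, ∀ q ∈ T, ((p.1 : ℝ) - q.1) ^ 2 + ((p.2 : ℝ) - q.2) ^ 2 ≤ 2 * s ^ 2 := by
      intro p hp q hq
      obtain ⟨h1, h2⟩ := hbox p hp q hq
      linarith [sq_le_sq' (abs_le.mp h1).1 (abs_le.mp h1).2,
        sq_le_sq' (abs_le.mp h2).1 (abs_le.mp h2).2]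
    have hjarnik : 4 * (m : ℝ) ≤ (2 * s ^ 2) * (2 * s ^ 2) * (2 * s ^ 2) := by
      have := four_mul_le_prod_sq_sides (hcirc p hp) (hcirc q hq) (hcirc r hr)
        (hne hpq) (hne hqr) (hne hpr).symm
      have hR := (Int.cast_le (R := ℝ)).mpr this
      push_cast at hR
      refine hR.trans ?_
      gcongr
      exacts [hside p hp q hq, hside q hq r hr, hside r hr p hp]
    nlinarith [pow_le_pow_left₀ (by norm_num) hs 6]

theorem card_le_of_forall_mem_Icc {t : Finset ℕ} {lo w : ℝ} (hw : 0 ≤ w)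
    (ht : ∀ j ∈ t, (j : ℝ) ∈ Set.Icc lo (lo + w)) : (t.card : ℝ) ≤ w + 1 := by
  rcases t.eq_empty_or_nonempty with rfl | hne
  · rw [Finset.card_empty, Nat.cast_zero]; linarith
  have hsub : t ⊆ Finset.Icc (t.min' hne) (t.max' hne) := fun j hj =>
    Finset.mem_Icc.mpr ⟨t.min'_le j hj, t.le_max' j hj⟩
  have hcard := Finset.card_le_card hsub
  rw [Nat.card_Icc] at hcard
  have hle : t.min' hne ≤ t.max' hne := t.min'_le _ (t.max'_mem hne)
  have hmin := (ht _ (t.min'_mem hne)).1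
  have hmax := (ht _ (t.max'_mem hne)).2
  calc (t.card : ℝ) ≤ ((t.max' hne + 1 - t.min' hne : ℕ) : ℝ) := by exact_mod_cast hcard
    _ = t.max' hne + 1 - t.min' hne := by rw [Nat.cast_sub (by omega)]; push_cast; ring
    _ ≤ w + 1 := by linarith

theorem card_le_mul_of_card_fiber_le {α : Type*} [DecidableEq α] {s : Finset α} {f : α → ℕ}
    {lo w K : ℝ} (hw : 0 ≤ w) (hf : ∀ x ∈ s, (f x : ℝ) ∈ Set.Icc lo (lo + w))
    (hK : ∀ j, ((s.filter fun x => f x = j).card : ℝ) ≤ K) : (s.card : ℝ) ≤ (w + 1) * K := by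
  have hK0 : 0 ≤ K := (Nat.cast_nonneg _).trans (hK 0)
  have himage : ((s.image f).card : ℝ) ≤ w + 1 := card_le_of_forall_mem_Icc hw fun j hj => by
    obtain ⟨x, hx, rfl⟩ := Finset.mem_image.mp hj
    exact hf x hx
  rw [Finset.card_eq_sum_card_image f s]
  push_cast
  calc ∑ j ∈ s.image f, ((s.filter fun x => f x = j).card : ℝ) ≤ ∑ _j ∈ s.image f, K :=
        Finset.sum_le_sum fun j _ => hK j
    _ = (s.image f).card * K := by rw [Finset.sum_const, nsmul_eq_mul]
    _ ≤ (w + 1) * K := mul_le_mul_of_nonneg_right himage hK0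

theorem abs_sq_sub_sq_le_of_abs_sub_le {C₁ x : ℝ} {n : ℕ} (hC₁ : 0 ≤ C₁) (hn : 1 ≤ n)
    (h : |x - π * (n - 1 / 4)| ≤ C₁ / n) :
    |x ^ 2 - (π * (n - 1 / 4)) ^ 2| ≤ C₁ ^ 2 + 2 * π * C₁ := by
  have hn' : (1 : ℝ) ≤ n := by exact_mod_cast hn
  set w := π * (n - 1 / 4)
  have hw : 0 ≤ w := mul_nonneg pi_pos.le (by linarith)
  have hε : C₁ / n ≤ C₁ := div_le_self hC₁ hn'
  have hεw : C₁ / n * w ≤ π * C₁ := by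
    rw [div_mul_eq_mul_div, div_le_iff₀ (by positivity)]
    have : C₁ * w = π * C₁ * n - π * C₁ / 4 := by ring
    nlinarith [mul_nonneg hC₁ pi_pos.le]
  calc |x ^ 2 - w ^ 2| = |x - w| * |(x - w) + 2 * w| := by rw [← abs_mul]; ring_nf
    _ ≤ C₁ / n * (C₁ / n + 2 * w) := by
        gcongr
        exact (abs_add_le _ _).trans
          (by rw [abs_of_nonneg (by positivity : 0 ≤ 2 * w)]; linarith)
    _ ≤ C₁ ^ 2 + 2 * π * C₁ := by nlinarith [div_nonneg hC₁ (by positivity : (0:ℝ) ≤ n)]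

theorem four_mul_sub_one_sq_add_sq_mem_Icc {z : ℕ → ℝ} {D ℓ : ℝ}
    (hD : ∀ n : ℕ, 1 ≤ n → |z n ^ 2 - (π * (n - 1 / 4)) ^ 2| ≤ D) {n₁ n₂ : ℕ} (h₁ : 1 ≤ n₁)
    (h₂ : 1 ≤ n₂) (h : |z n₁ ^ 2 + z n₂ ^ 2 - ℓ| < 1) :
    (((4 * n₁ - 1) ^ 2 + (4 * n₂ - 1) ^ 2 : ℕ) : ℝ) ∈
      Set.Icc (16 * (ℓ - 1 - 2 * D) / π ^ 2)
        (16 * (ℓ - 1 - 2 * D) / π ^ 2 + 32 * (1 + 2 * D) / π ^ 2) := by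
  have hX : (((4 * n₁ - 1) ^ 2 + (4 * n₂ - 1) ^ 2 : ℕ) : ℝ) * π ^ 2 =
      16 * ((π * (n₁ - 1 / 4)) ^ 2 + (π * (n₂ - 1 / 4)) ^ 2) := by
    push_cast [Nat.cast_sub (by omega : 1 ≤ 4 * n₁), Nat.cast_sub (by omega : 1 ≤ 4 * n₂)]
    ring
  obtain ⟨e₁, e₁'⟩ := abs_le.mp (hD n₁ h₁)
  obtain ⟨e₂, e₂'⟩ := abs_le.mp (hD n₂ h₂)
  obtain ⟨e, e'⟩ := abs_lt.mp h
  rw [Set.mem_Icc, ← add_div, div_le_iff₀ (by positivity), le_div_iff₀ (by positivity)]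
  constructor <;> linarith

theorem card_le_of_four_mul_sub_one_sq_add_sq_eq {R a b : ℝ} (hR : 3 ≤ R) {T : Finset (ℕ × ℕ)}
    {m : ℕ} (hT : ∀ p ∈ T, 1 ≤ p.1 ∧ 1 ≤ p.2 ∧ (p.1 : ℝ) ∈ Set.Icc a (a + R) ∧
      (p.2 : ℝ) ∈ Set.Icc b (b + R) ∧ (4 * p.1 - 1) ^ 2 + (4 * p.2 - 1) ^ 2 = m) :
    (T.card : ℝ) ≤ 3 * exp (4200 * log R / log (log R)) := by
  let φ : ℕ × ℕ → ℕ × ℕ := fun p => (4 * p.1 - 1, 4 * p.2 - 1)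
  have hφ : Function.Injective φ := fun p q h => by
    simp only [φ, Prod.ext_iff] at h ⊢; omega
  have hsub : T.image φ ⊆ sumTwoSquaresReps m := by
    simp only [Finset.image_subset_iff, mem_sumTwoSquaresReps, φ]
    intro p hp
    obtain ⟨h₁, h₂, -, -, hm⟩ := hT p hp
    exact ⟨by omega, by omega, hm⟩
  have hbox : ∀ p ∈ T.image φ, ∀ q ∈ T.image φ,
      |(p.1 : ℝ) - q.1| ≤ 4 * R ∧ |(p.2 : ℝ) - q.2| ≤ 4 * R := by
    simp only [Finset.mem_image, forall_exists_index, and_imp]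
    rintro _ p hp rfl _ q hq rfl
    obtain ⟨hp₁, hp₂, ⟨hpa, hpa'⟩, ⟨hpb, hpb'⟩, -⟩ := hT p hp
    obtain ⟨hq₁, hq₂, ⟨hqa, hqa'⟩, ⟨hqb, hqb'⟩, -⟩ := hT q hq
    simp only [φ]
    push_cast [Nat.cast_sub (by omega : 1 ≤ 4 * p.1), Nat.cast_sub (by omega : 1 ≤ 4 * p.2),
      Nat.cast_sub (by omega : 1 ≤ 4 * q.1), Nat.cast_sub (by omega : 1 ≤ 4 * q.2)]
    constructor <;> rw [abs_le] <;> constructor <;> linarith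
  have hcard := card_le_of_subset_sumTwoSquaresReps (by linarith) hsub hbox
  rw [Finset.card_image_of_injective T hφ] at hcard
  have hratio := log_div_log_log_le_of_le_pow (k := 3) (y := 4 * R) hR (by linarith)
    (by nlinarith [mul_le_mul hR hR (by norm_num) (by linarith)])
  have hexp :
      exp (1400 * log (4 * R) / log (log (4 * R))) ≤ exp (4200 * log R / log (log R)) := by
    rw [exp_le_exp, mul_div_assoc,
      show (4200 : ℝ) * log R / log (log R) = 1400 * (3 * log R / log (log R)) by ring]
    push_cast at hratio
    linarith
  have hlogR := one_lt_log_of_three_le hR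
  have hone : 1 ≤ exp (4200 * log R / log (log R)) :=
    one_le_exp (div_nonneg (by positivity) (log_pos hlogR).le)
  linarith

/-- Lemma 2.2: for frequencies `z_n` satisfying the radial Dirichlet eigenvalue
asymptotics on the disc, the number of pairs `(n₁, n₂)` of positive integers lying in a
box of size `R₁` with `|z_{n₁}² + z_{n₂}² − ℓ| < 1` is at most
`C · exp(c · log R₁ / log log R₁)`. -/
theorem pair_count_in_box_bound (C₁ : ℝ) (hC₁ : 0 < C₁) (z : ℕ → ℝ)
    (hz : ∀ n : ℕ, 1 ≤ n → |z n - π * (n - 1 / 4)| ≤ C₁ / n) :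
    ∃ c > (0 : ℝ), ∃ C > (0 : ℝ), ∀ ℓ : ℝ, ∀ R₁ : ℝ, R₁ ≥ 3 → ∀ a b : ℝ,
      (({p : ℕ × ℕ | 1 ≤ p.1 ∧ 1 ≤ p.2 ∧
          (p.1 : ℝ) ∈ Set.Icc a (a + R₁) ∧ (p.2 : ℝ) ∈ Set.Icc b (b + R₁) ∧
          |z p.1 ^ 2 + z p.2 ^ 2 - ℓ| < 1}).ncard : ℝ)
        ≤ C * Real.exp (c * Real.log R₁ / Real.log (Real.log R₁)) := by
  set D := C₁ ^ 2 + 2 * π * C₁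
  have hD : ∀ n : ℕ, 1 ≤ n → |z n ^ 2 - (π * (n - 1 / 4)) ^ 2| ≤ D := fun n hn =>
    abs_sq_sub_sq_le_of_abs_sub_le hC₁.le hn (hz n hn)
  refine ⟨4200, by norm_num, 3 * (32 * (1 + 2 * D) / π ^ 2 + 1), by positivity,
    fun ℓ R₁ hR₁ a b => ?_⟩
  set S := {p : ℕ × ℕ | 1 ≤ p.1 ∧ 1 ≤ p.2 ∧
    (p.1 : ℝ) ∈ Set.Icc a (a + R₁) ∧ (p.2 : ℝ) ∈ Set.Icc b (b + R₁) ∧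
    |z p.1 ^ 2 + z p.2 ^ 2 - ℓ| < 1}
  have hS : S.Finite := ((Set.finite_Iic ⌊a + R₁⌋₊).prod (Set.finite_Iic ⌊b + R₁⌋₊)).subset
    fun p ⟨_, _, ⟨_, ha⟩, ⟨_, hb⟩, _⟩ => ⟨Nat.le_floor ha, Nat.le_floor hb⟩
  have hmem : ∀ p ∈ hS.toFinset, p ∈ S := fun p hp => hS.mem_toFinset.mp hp
  rw [Set.ncard_eq_toFinset_card S hS]
  calc _ ≤ (32 * (1 + 2 * D) / π ^ 2 + 1) * (3 * exp (4200 * log R₁ / log (log R₁))) :=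
        card_le_mul_of_card_fiber_le (f := fun p => (4 * p.1 - 1) ^ 2 + (4 * p.2 - 1) ^ 2)
          (by positivity)
          (fun p hp => have ⟨h₁, h₂, _, _, h⟩ := hmem p hp
            four_mul_sub_one_sq_add_sq_mem_Icc hD h₁ h₂ h)
          (fun j => card_le_of_four_mul_sub_one_sq_add_sq_eq hR₁ fun p hp =>
            have ⟨hp, hj⟩ := Finset.mem_filter.mp hp
            have ⟨h₁, h₂, ha, hb, _⟩ := hmem p hp
            ⟨h₁, h₂, ha, hb, hj⟩)
    _ = _ := by ring
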